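/- Let q ≠ 0 and let γ : ℝ → E be a three-times differentiable unit-speed magnetic curve with charge q (γ''(t) = -q·φ(γ'(t)), ‖γ'(t)‖ = 1) that has nonvanishing first curvature (γ''(t) ≠ 0 for all t) and osculating order 2, i.e. γ'''(t) = -‖γ''(t)‖²·γ'(t) for all t. Then γ is a Legendre curve (γ'_{2n+α}(t) = 0 for all t and all α = 1,…,s) and its first curvature is ‖γ''(t)‖ = |q| for all t. -/

import Mathlib

/-! `φ` kills the characteristic directions, so the magnetic equation makes the `ξ_α`-components
of `γ''` vanish identically, hence also those of `γ'''`. Osculating order 2 makes `γ'''` a nonzero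
multiple of `γ'`, so `γ'` has no `ξ_α`-components: `γ` is Legendre. On such vectors `φ` only
permutes coordinates up to sign, so it is an isometry and `‖γ''‖ = |q| ‖φ γ'‖ = |q|. -/

open scoped RealInnerProductSpace

/-- The structure tensor `φ` of the standard `C`-manifold structure on `ℝ^{2n+s}`:
`(φv)_i = v_{n+i}`, `(φv)_{n+i} = -v_i` for `0 ≤ i < n`, and `(φv)_{2n+α} = 0`. -/
noncomputable def phi (n s : ℕ) (v : EuclideanSpace ℝ (Fin (2*n+s))) :
    EuclideanSpace ℝ (Fin (2*n+s)) := WithLp.toLp 2 fun k =>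
  if _h1 : (k : ℕ) < n then v ⟨n + (k : ℕ), by omega⟩
  else if _h2 : (k : ℕ) < 2*n then -v ⟨(k : ℕ) - n, by omega⟩
  else 0

/-- The index `2n+α` of the characteristic direction `ξ_α = e_{2n+α}`. -/
def idxA (n s : ℕ) (α : Fin s) : Fin (2*n+s) := ⟨2*n + (α : ℕ), by omega⟩

/-- The index `i` for `1 ≤ i ≤ n` (0-based). -/
def idxI (n s : ℕ) (i : Fin n) : Fin (2*n+s) := ⟨(i : ℕ), by omega⟩

/-- The index `n+i` for `1 ≤ i ≤ n` (0-based). -/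
def idxNI (n s : ℕ) (i : Fin n) : Fin (2*n+s) := ⟨n + (i : ℕ), by omega⟩

/-- `v` lies in the common kernel of the forms `η^α`. -/
def IsHorizontal (n s : ℕ) (v : EuclideanSpace ℝ (Fin (2*n+s))) : Prop :=
  ∀ α : Fin s, v (idxA n s α) = 0

section StandardStructure

variable {n s : ℕ}

theorem phi_apply_idxA (v : EuclideanSpace ℝ (Fin (2*n+s))) (α : Fin s) :
    phi n s v (idxA n s α) = 0 := by
  simp only [phi, idxA, WithLp.ofLp_toLp]
  rw [dif_neg (by omega), dif_neg (by omega)]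

theorem IsHorizontal.apply_eq_zero {v : EuclideanSpace ℝ (Fin (2*n+s))} (hv : IsHorizontal n s v)
    {k : Fin (2*n+s)} (hk : 2*n ≤ (k : ℕ)) : v k = 0 := by
  simpa [idxA, Nat.add_sub_cancel' hk] using hv ⟨k - 2*n, by omega⟩

/-- `(phi n s v) k = ± v (phiIndexSwap n s k)` for `k < 2n`. -/
def phiIndexSwap (n s : ℕ) (k : Fin (2*n+s)) : Fin (2*n+s) :=
  ⟨if (k : ℕ) < n then n + k else if (k : ℕ) < 2*n then k - n else k, by split_ifs <;> omega⟩

theorem phiIndexSwap_involutive : Function.Involutive (phiIndexSwap n s) := by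
  intro k
  ext
  simp only [phiIndexSwap]
  split_ifs <;> omega

theorem phi_apply_sq_of_isHorizontal {v : EuclideanSpace ℝ (Fin (2*n+s))}
    (hv : IsHorizontal n s v) (k : Fin (2*n+s)) :
    phi n s v k ^ 2 = v (phiIndexSwap n s k) ^ 2 := by
  simp only [phi, phiIndexSwap, WithLp.ofLp_toLp]
  split_ifs with h₁ h₂
  · rfl
  · exact neg_sq _
  · simp [hv.apply_eq_zero (not_lt.mp h₂)]

theorem norm_phi_of_isHorizontal {v : EuclideanSpace ℝ (Fin (2*n+s))} (hv : IsHorizontal n s v) :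
    ‖phi n s v‖ = ‖v‖ := by
  refine (sq_eq_sq₀ (norm_nonneg _) (norm_nonneg _)).mp ?_
  simp only [EuclideanSpace.real_norm_sq_eq, phi_apply_sq_of_isHorizontal hv]
  exact Equiv.sum_comp (phiIndexSwap_involutive.toPerm _) (fun k => v k ^ 2)

end StandardStructure

theorem deriv_euclideanSpace_apply {ι : Type*} [Fintype ι] {f : ℝ → EuclideanSpace ℝ ι} {t : ℝ}
    (hf : DifferentiableAt ℝ f t) (k : ι) :
    deriv f t k = deriv (fun u => f u k) t :=
  (((EuclideanSpace.proj k).hasFDerivAt.comp_hasDerivAt t hf.hasDerivAt).deriv).symm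

theorem isHorizontal_deriv_of_magnetic_of_osculating {n s : ℕ} {q : ℝ}
    {γ : ℝ → EuclideanSpace ℝ (Fin (2*n+s))}
    (hγ'' : Differentiable ℝ (deriv (deriv γ)))
    (hmag : ∀ t : ℝ, deriv (deriv γ) t = (-q) • phi n s (deriv γ t))
    (hκ₁ : ∀ t : ℝ, deriv (deriv γ) t ≠ 0)
    (hosc : ∀ t : ℝ, deriv (deriv (deriv γ)) t = -(‖deriv (deriv γ) t‖ ^ 2) • deriv γ t)
    (t : ℝ) : IsHorizontal n s (deriv γ t) := by
  intro α
  have hξ : deriv (deriv (deriv γ)) t (idxA n s α) = 0 := by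
    simp [deriv_euclideanSpace_apply (hγ'' t), hmag, phi_apply_idxA]
  simpa [hosc t, hκ₁ t] using hξ

theorem normal_magnetic_curve_order_two_is_legendre_circle_general
    (n s : ℕ) (q : ℝ)
    (γ : ℝ → EuclideanSpace ℝ (Fin (2*n+s)))
    (hγ'' : Differentiable ℝ (deriv (deriv γ)))
    (hmag : ∀ t : ℝ, deriv (deriv γ) t = (-q) • phi n s (deriv γ t))
    (hunit : ∀ t : ℝ, ‖deriv γ t‖ = 1)
    (hκ₁ : ∀ t : ℝ, deriv (deriv γ) t ≠ 0)
    (hosc : ∀ t : ℝ, deriv (deriv (deriv γ)) t =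
      -(‖deriv (deriv γ) t‖ ^ 2) • deriv γ t) :
    (∀ t : ℝ, ∀ α : Fin s, deriv γ t (idxA n s α) = 0) ∧
    (∀ t : ℝ, ‖deriv (deriv γ) t‖ = |q|) := by
  have hleg := isHorizontal_deriv_of_magnetic_of_osculating hγ'' hmag hκ₁ hosc
  refine ⟨hleg, fun t => ?_⟩
  rw [hmag t, norm_smul, norm_phi_of_isHorizontal (hleg t), hunit t, norm_neg, Real.norm_eq_abs,
    mul_one]

/-- A normal magnetic curve of osculating order 2 (nonvanishing `κ₁` and
`γ''' = -‖γ''‖²·γ'`) in the standard `C`-manifold `ℝ^{2n+s}` is a Legendre circle with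
`κ₁ = |q|`. -/
theorem normal_magnetic_curve_order_two_is_legendre_circle
    (n s : ℕ) (hn : 0 < n) (hs : 0 < s) (q : ℝ) (hq : q ≠ 0)
    (γ : ℝ → EuclideanSpace ℝ (Fin (2*n+s)))
    (hγ : Differentiable ℝ γ) (hγ' : Differentiable ℝ (deriv γ))
    (hγ'' : Differentiable ℝ (deriv (deriv γ)))
    (hmag : ∀ t : ℝ, deriv (deriv γ) t = (-q) • phi n s (deriv γ t))
    (hunit : ∀ t : ℝ, ‖deriv γ t‖ = 1)
    (hκ₁ : ∀ t : ℝ, deriv (deriv γ) t ≠ 0)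
    (hosc : ∀ t : ℝ, deriv (deriv (deriv γ)) t =
      -(‖deriv (deriv γ) t‖ ^ 2) • deriv γ t) :
    (∀ t : ℝ, ∀ α : Fin s, deriv γ t (idxA n s α) = 0) ∧
    (∀ t : ℝ, ‖deriv (deriv γ) t‖ = |q|) :=
  normal_magnetic_curve_order_two_is_legendre_circle_general n s q γ hγ'' hmag hunit hκ₁ hosc
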